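/- In the Artin braid group B_n, for every index i with 2 ≤ i ≤ n−2, writing a = σ_{i−1}, b = σ_i, c = σ_{i+1} (so that aba = bab, bcb = cbc, and ac = ca), the product of the four node braids obtained by regenerating a single node into four nodes satisfies (c^{−1} b² c) · b² · (c^{−1} b^{−1} a² b c) · (b^{−1} a² b) = b a c b² a c b. -/

import Mathlib

/-- The braid relations among `m` Artin generators `σ_1, …, σ_m`, where the
generator `σ_{k+1}` is represented by the index `k : Fin m`:
`σ_i σ_{i+1} σ_i = σ_{i+1} σ_i σ_{i+1}` and `σ_i σ_j = σ_j σ_i` for `|i - j| ≥ 2`. -/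
def braidRels (m : ℕ) : Set (FreeGroup (Fin m)) :=
  { r | (∃ i j : Fin m, (i : ℕ) + 1 = (j : ℕ) ∧
          r = FreeGroup.of i * FreeGroup.of j * FreeGroup.of i *
              (FreeGroup.of j * FreeGroup.of i * FreeGroup.of j)⁻¹) ∨
        (∃ i j : Fin m, (i : ℕ) + 2 ≤ (j : ℕ) ∧
          r = FreeGroup.of i * FreeGroup.of j * (FreeGroup.of i)⁻¹ * (FreeGroup.of j)⁻¹) }

/-- The Artin braid group `B_n` on `n` strands, presented by the generators
`σ_1, …, σ_{n-1}` subject to the braid relations. -/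
def BraidGroup (n : ℕ) : Type := PresentedGroup (braidRels (n - 1))

instance (n : ℕ) : Group (BraidGroup n) :=
  inferInstanceAs (Group (PresentedGroup (braidRels (n - 1))))

/-- The Artin generator `σ_k` of the braid group `B_n`, defined for `1 ≤ k ≤ n - 1`
(with junk value `1` for indices out of range). -/
def σ (n : ℕ) (k : ℕ) : BraidGroup n :=
  if h : 1 ≤ k ∧ k ≤ n - 1 then
    (PresentedGroup.of (⟨k - 1, by omega⟩ : Fin (n - 1)) : PresentedGroup (braidRels (n - 1)))
  else 1

/-!
The braid relation `aba = bab` says `b⁻¹ a b = a b a⁻¹`, so `b⁻¹ a² b = a b² a⁻¹`, and likewise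
`c⁻¹ b² c = b c² b⁻¹`. Substituting these (and using `ac = ca`) turns the left-hand side into
`b c² (bab) c² b a⁻¹`, which the braid relations, together with `c² b c² = c b² c b`, rewrite into
the right-hand side.
-/

section BraidRelation

variable {G : Type*} [Group G] {a b c : G}

theorem inv_mul_pow_mul_of_braid (h : a * b * a = b * a * b) (k : ℕ) :
    b⁻¹ * a ^ k * b = a * b ^ k * a⁻¹ := by
  have hconj : b⁻¹ * a * b = a * b * a⁻¹ := by
    calc b⁻¹ * a * b = b⁻¹ * (a * b * a) * a⁻¹ := by group
      _ = a * b * a⁻¹ := by rw [h]; group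
  calc b⁻¹ * a ^ k * b = (b⁻¹ * a * b) ^ k := by simpa using (conj_pow (a := b⁻¹) (b := a)).symm
    _ = a * b ^ k * a⁻¹ := by rw [hconj, conj_pow]

theorem sq_mul_mul_sq_of_braid (h : b * c * b = c * b * c) :
    c ^ 2 * b * c ^ 2 = c * b ^ 2 * c * b := by
  calc c ^ 2 * b * c ^ 2 = c * (c * b * c) * c := by simp only [sq, mul_assoc]
    _ = c * (b * c * b) * c := by rw [h]
    _ = c * b * (c * b * c) := by simp only [mul_assoc]
    _ = c * b ^ 2 * c * b := by rw [← h]; simp only [sq, mul_assoc]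

theorem four_nodes_identity (hab : a * b * a = b * a * b) (hbc : b * c * b = c * b * c)
    (hac : Commute a c) :
    (c⁻¹ * b ^ 2 * c) * b ^ 2 * (c⁻¹ * b⁻¹ * a ^ 2 * b * c) * (b⁻¹ * a ^ 2 * b) =
      b * a * c * b ^ 2 * a * c * b := by
  have hcb := inv_mul_pow_mul_of_braid hbc 2
  have hba := inv_mul_pow_mul_of_braid hab 2
  have hac2 : a * c ^ 2 = c ^ 2 * a := (hac.pow_right 2).eq
  have hcba : c⁻¹ * b⁻¹ * a ^ 2 * b * c = a * (b * c ^ 2 * b⁻¹) * a⁻¹ := by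
    calc c⁻¹ * b⁻¹ * a ^ 2 * b * c = c⁻¹ * (b⁻¹ * a ^ 2 * b) * c := by group
      _ = (c⁻¹ * a) * b ^ 2 * (a⁻¹ * c) := by rw [hba]; group
      _ = a * (c⁻¹ * b ^ 2 * c) * a⁻¹ := by rw [← hac.inv_right.eq, hac.inv_left.eq]; group
      _ = a * (b * c ^ 2 * b⁻¹) * a⁻¹ := by rw [hcb]
  calc (c⁻¹ * b ^ 2 * c) * b ^ 2 * (c⁻¹ * b⁻¹ * a ^ 2 * b * c) * (b⁻¹ * a ^ 2 * b)
      = b * c ^ 2 * (b * a * b) * c ^ 2 * b * a⁻¹ := by rw [hcb, hcba, hba]; group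
    _ = b * (c ^ 2 * a) * b * a * c ^ 2 * b * a⁻¹ := by rw [← hab]; group
    _ = b * a * c ^ 2 * b * (a * c ^ 2) * b * a⁻¹ := by rw [← hac2]; group
    _ = b * a * (c ^ 2 * b * c ^ 2) * a * b * a⁻¹ := by rw [hac2]; group
    _ = b * a * c * b ^ 2 * c * (b * a * b) * a⁻¹ := by rw [sq_mul_mul_sq_of_braid hbc]; group
    _ = b * a * c * b ^ 2 * (c * a) * b := by rw [← hab]; group
    _ = b * a * c * b ^ 2 * a * c * b := by rw [← hac.eq]; group

end BraidRelation

theorem PresentedGroup.of_braidRels_braid {m : ℕ} {i j : Fin m} (h : (i : ℕ) + 1 = j) :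
    (PresentedGroup.of i * PresentedGroup.of j * PresentedGroup.of i :
      PresentedGroup (braidRels m)) =
      PresentedGroup.of j * PresentedGroup.of i * PresentedGroup.of j :=
  PresentedGroup.mk_eq_mk_of_mul_inv_mem (Or.inl ⟨i, j, h, rfl⟩)

theorem PresentedGroup.of_braidRels_commute {m : ℕ} {i j : Fin m} (h : (i : ℕ) + 2 ≤ j) :
    Commute (PresentedGroup.of i : PresentedGroup (braidRels m)) (PresentedGroup.of j) :=
  PresentedGroup.mk_eq_mk_of_mul_inv_mem <| by
    rw [mul_inv_rev, ← mul_assoc]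
    exact Or.inr ⟨i, j, h, rfl⟩

theorem σ_eq_of {n k : ℕ} (h : 1 ≤ k ∧ k ≤ n - 1) :
    σ n k = (PresentedGroup.of (⟨k - 1, by omega⟩ : Fin (n - 1)) :
      PresentedGroup (braidRels (n - 1))) :=
  dif_pos h

theorem σ_eq_one {n k : ℕ} (h : ¬(1 ≤ k ∧ k ≤ n - 1)) : σ n k = 1 :=
  dif_neg h

theorem σ_braid {n j k : ℕ} (hjk : j + 1 = k) (hj : 1 ≤ j) (hk : k ≤ n - 1) :
    σ n j * σ n k * σ n j = σ n k * σ n j * σ n k := by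
  rw [σ_eq_of ⟨hj, by omega⟩, σ_eq_of ⟨by omega, hk⟩]
  exact PresentedGroup.of_braidRels_braid (by simp only; omega)

theorem σ_commute (n : ℕ) {j k : ℕ} (hjk : j + 2 ≤ k) : Commute (σ n j) (σ n k) := by
  by_cases hj : 1 ≤ j ∧ j ≤ n - 1
  · by_cases hk : 1 ≤ k ∧ k ≤ n - 1
    · rw [σ_eq_of hj, σ_eq_of hk]
      exact PresentedGroup.of_braidRels_commute (by simp only; omega)
    · rw [σ_eq_one hk]
      exact Commute.one_right _
  · rw [σ_eq_one hj]
    exact Commute.one_left _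

/-- In `B_n`, for `2 ≤ i ≤ n - 2`, writing `a = σ_{i-1}`, `b = σ_i`, `c = σ_{i+1}`,
the product of the four node braids obtained by regenerating a single node into four
nodes satisfies `(c⁻¹ b² c) b² (c⁻¹ b⁻¹ a² b c)(b⁻¹ a² b) = b a c b² a c b`. -/
theorem four_nodes_regeneration (n i : ℕ) (h1 : 2 ≤ i) (h2 : i ≤ n - 2) :
    ((σ n (i + 1))⁻¹ * σ n i ^ 2 * σ n (i + 1)) * σ n i ^ 2 *
        ((σ n (i + 1))⁻¹ * (σ n i)⁻¹ * σ n (i - 1) ^ 2 * σ n i * σ n (i + 1)) *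
        ((σ n i)⁻¹ * σ n (i - 1) ^ 2 * σ n i) =
      σ n i * σ n (i - 1) * σ n (i + 1) * σ n i ^ 2 * σ n (i - 1) * σ n (i + 1) * σ n i :=
  four_nodes_identity (σ_braid (by omega) (by omega) (by omega))
    (σ_braid rfl (by omega) (by omega)) (σ_commute n (by omega))
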